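/- If z_1, …, z_m are the complex roots (with multiplicity) of L*_m, then ∑_{j=1}^m z_j^2 = ∑_{j=1}^{⌊(m+1)/2⌋} b_j^2 + 2·∑_{j=1}^{⌊m/2⌋} (a_j^2 − 1). -/

import Mathlib

open Polynomial Finset

/-- Geronimo–Case recursion: `(GC a b m).1 = L*_m`, `(GC a b m).2 = K_m`. -/
noncomputable def GC (a b : ℕ → ℝ) : ℕ → Polynomial ℝ × Polynomial ℝ
  | 0 => (1, 1)
  | m + 1 =>
      let p := GC a b m
      if m % 2 = 0 then
        (Polynomial.X * p.1 - Polynomial.C (b (m / 2 + 1)) * p.2, p.2)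
      else
        (Polynomial.X * p.1 - Polynomial.C ((a (m / 2 + 1)) ^ 2 - 1) * p.2,
         Polynomial.X * p.1 + p.2)

/-!
Read `L*_m` backwards. The reflected polynomials `ℓ_m = x ^ m L*_m(1/x)`, `κ_m = x ^ m K_m(1/x)`
satisfy `ℓ_{m+1} = ℓ_m - β x κ_m` with `β = b_{k+1}` or `a_{k+1}² - 1`, and for even `m` the
polynomial `κ_m` agrees with `ℓ_m` up to order `x`. Hence the coefficients `c₁, c₂` of `x, x²`
in `ℓ_m` obey a short recursion along which `c₁² - 2 c₂` grows by `b_{k+1}²` at odd steps and by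
`2 (a_{k+1}² - 1)` at even ones. Reflecting `∏ (X - z_j)` gives `∏ (1 - z_j x)`, whose
`c₁² - 2 c₂` is `∑ z_j²`. Working with the reflected polynomials avoids separate cases for `m < 2`.
-/

section Reflect

variable {R : Type*}

theorem reflect_succ_X_mul [Semiring R] {p : R[X]} {n : ℕ} (hp : p.natDegree ≤ n) :
    reflect (n + 1) (X * p) = reflect n p := by
  rw [add_comm, reflect_mul X p natDegree_X_le hp, reflect_one_X, one_mul]

theorem reflect_succ [Semiring R] {p : R[X]} {n : ℕ} (hp : p.natDegree ≤ n) :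
    reflect (n + 1) p = X * reflect n p := by
  simpa [add_comm] using reflect_mul (1 : R[X]) p (F := 1) (by simp) hp

theorem reflect_succ_X_mul_sub_C_mul [Ring R] {p q : R[X]} {n : ℕ} (hp : p.natDegree ≤ n)
    (hq : q.natDegree ≤ n) (c : R) :
    reflect (n + 1) (X * p - C c * q) = reflect n p - C c * X * reflect n q := by
  rw [reflect_sub, reflect_C_mul, reflect_succ_X_mul hp, reflect_succ hq, mul_assoc]

theorem reflect_prod_X_sub_C [CommRing R] {ι : Type*} (s : Finset ι) (z : ι → R) :
    reflect #s (∏ i ∈ s, (X - C (z i))) = ∏ i ∈ s, (1 - C (z i) * X) := by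
  classical
  induction s using Finset.induction_on with
  | empty => simp
  | insert w s hw ih =>
    have hdeg : (∏ i ∈ s, (X - C (z i))).natDegree ≤ #s := by
      simpa using (natDegree_prod_le s _).trans
        (sum_le_card_nsmul s _ 1 fun i _ => natDegree_X_sub_C_le (z i))
    rw [prod_insert hw, prod_insert hw, card_insert_of_notMem hw, add_comm,
      reflect_mul _ _ (natDegree_X_sub_C_le _) hdeg, ih, reflect_sub, reflect_one_X,
      reflect_C, pow_one]

end Reflect

section Coeff

variable {R : Type*} [Ring R]

theorem coeff_sub_C_mul_X_mul_zero (p q : R[X]) (c : R) :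
    (p - C c * X * q).coeff 0 = p.coeff 0 := by
  simp [mul_assoc]

theorem coeff_sub_C_mul_X_mul_succ (p q : R[X]) (c : R) (n : ℕ) :
    (p - C c * X * q).coeff (n + 1) = p.coeff (n + 1) - c * q.coeff n := by
  simp [mul_assoc, coeff_C_mul]

end Coeff

theorem sum_sq_eq_coeff_prod_one_sub_C_mul_X {R ι : Type*} [CommRing R] (s : Finset ι)
    (z : ι → R) :
    ∑ i ∈ s, z i ^ 2 =
      (∏ i ∈ s, (1 - C (z i) * X)).coeff 1 ^ 2 - 2 * (∏ i ∈ s, (1 - C (z i) * X)).coeff 2 := by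
  classical
  induction s using Finset.induction_on with
  | empty => simp [coeff_one]
  | insert w s hw ih =>
    set q := ∏ i ∈ s, (1 - C (z i) * X)
    have hq0 : q.coeff 0 = 1 := by simp [q, coeff_zero_eq_eval_zero, eval_prod]
    have hmul : (1 - C (z w) * X) * q = q - C (z w) * X * q := by ring
    rw [sum_insert hw, prod_insert hw, hmul, coeff_sub_C_mul_X_mul_succ,
      coeff_sub_C_mul_X_mul_succ, hq0, ih]
    ring

namespace GC

variable (a b : ℕ → ℝ)

theorem natDegree_le (m : ℕ) : (GC a b m).1.natDegree ≤ m ∧ (GC a b m).2.natDegree ≤ m := by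
  induction m with
  | zero => simp [GC]
  | succ m ih =>
    have hXp : (X * (GC a b m).1).natDegree ≤ m + 1 :=
      (natDegree_mul_le_of_le natDegree_X_le ih.1).trans_eq (add_comm 1 m)
    have hCq (c : ℝ) : (C c * (GC a b m).2).natDegree ≤ m + 1 :=
      (natDegree_C_mul_le _ _).trans (by omega)
    have hsub (c : ℝ) : (X * (GC a b m).1 - C c * (GC a b m).2).natDegree ≤ m + 1 :=
      (natDegree_sub_le_of_le hXp (hCq c)).trans_eq (max_self _)
    simp only [GC]
    split_ifs
    · exact ⟨hsub _, ih.2.trans m.le_succ⟩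
    · exact ⟨hsub _, natDegree_add_le_of_degree_le hXp (ih.2.trans m.le_succ)⟩

noncomputable def reflected (m : ℕ) : ℝ[X] × ℝ[X] :=
  ((GC a b m).1.reflect m, (GC a b m).2.reflect m)

theorem reflected_zero : reflected a b 0 = (1, 1) := by
  simp [reflected, GC]

theorem reflected_succ (m : ℕ) :
    reflected a b (m + 1) =
      let p := reflected a b m
      if m % 2 = 0 then (p.1 - C (b (m / 2 + 1)) * X * p.2, X * p.2)
      else (p.1 - C (a (m / 2 + 1) ^ 2 - 1) * X * p.2, p.1 + X * p.2) := by
  obtain ⟨h1, h2⟩ := natDegree_le a b m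
  simp only [reflected, GC]
  split_ifs
  · rw [reflect_succ_X_mul_sub_C_mul h1 h2, reflect_succ h2]
  · rw [reflect_succ_X_mul_sub_C_mul h1 h2, reflect_add, reflect_succ_X_mul h1, reflect_succ h2]

theorem reflected_two_mul_add_one (k : ℕ) :
    reflected a b (2 * k + 1) =
      ((reflected a b (2 * k)).1 - C (b (k + 1)) * X * (reflected a b (2 * k)).2,
        X * (reflected a b (2 * k)).2) := by
  rw [reflected_succ]
  simp

theorem reflected_two_mul_add_two (k : ℕ) :
    reflected a b (2 * k + 2) =
      ((reflected a b (2 * k + 1)).1 - C (a (k + 1) ^ 2 - 1) * X * (reflected a b (2 * k + 1)).2,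
        (reflected a b (2 * k + 1)).1 + X * (reflected a b (2 * k + 1)).2) := by
  rw [reflected_succ]
  simp [Nat.add_mod, show (2 * k + 1) / 2 = k by omega]

theorem coeff_reflected_two_mul (k : ℕ) :
    (reflected a b (2 * k)).1.coeff 0 = 1 ∧ (reflected a b (2 * k)).2.coeff 0 = 1 ∧
      (reflected a b (2 * k)).2.coeff 1 = (reflected a b (2 * k)).1.coeff 1 ∧
      (reflected a b (2 * k)).1.coeff 1 ^ 2 - 2 * (reflected a b (2 * k)).1.coeff 2 =
        ∑ j ∈ Icc 1 k, b j ^ 2 + 2 * ∑ j ∈ Icc 1 k, (a j ^ 2 - 1) := by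
  induction k with
  | zero => simp [reflected_zero, coeff_one]
  | succ k ih =>
    obtain ⟨hℓ0, hκ0, hκ1, hsum⟩ := ih
    rw [mul_add_one, reflected_two_mul_add_two, reflected_two_mul_add_one]
    simp only [coeff_sub_C_mul_X_mul_zero, coeff_sub_C_mul_X_mul_succ, coeff_add, coeff_X_mul,
      coeff_X_mul_zero, hℓ0, hκ0, hκ1, sum_Icc_succ_top (Nat.le_add_left 1 k)]
    exact ⟨trivial, add_zero 1, by ring, by linear_combination hsum⟩

theorem coeff_reflected_sq_sub (m : ℕ) :
    (reflected a b m).1.coeff 1 ^ 2 - 2 * (reflected a b m).1.coeff 2 =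
      ∑ j ∈ Icc 1 ((m + 1) / 2), b j ^ 2 + 2 * ∑ j ∈ Icc 1 (m / 2), (a j ^ 2 - 1) := by
  obtain ⟨k, rfl | rfl⟩ := Nat.even_or_odd' m
  · rw [show (2 * k + 1) / 2 = k by omega, show 2 * k / 2 = k by omega]
    exact (coeff_reflected_two_mul a b k).2.2.2
  · obtain ⟨-, hκ0, hκ1, hsum⟩ := coeff_reflected_two_mul a b k
    rw [show (2 * k + 1 + 1) / 2 = k + 1 by omega, show (2 * k + 1) / 2 = k by omega,
      sum_Icc_succ_top (Nat.le_add_left 1 k), reflected_two_mul_add_one]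
    simp only [coeff_sub_C_mul_X_mul_succ, hκ0, hκ1]
    linear_combination hsum

end GC

theorem geronimo_case_sum_root_squares_general (a b : ℕ → ℝ)
    (m : ℕ) (z : Fin m → ℂ)
    (hz : ((GC a b m).1).map (algebraMap ℝ ℂ) = ∏ j, (X - C (z j))) :
    ∑ j, (z j) ^ 2 =
      (∑ j ∈ Finset.Icc 1 ((m + 1) / 2), ((b j : ℝ) : ℂ) ^ 2)
        + 2 * ∑ j ∈ Finset.Icc 1 (m / 2), (((a j : ℝ) : ℂ) ^ 2 - 1) := by
  have hreflected : (GC.reflected a b m).1.map (algebraMap ℝ ℂ) = ∏ j, (1 - C (z j) * X) := by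
    rw [GC.reflected, ← reflect_map, hz, ← reflect_prod_X_sub_C, card_univ, Fintype.card_fin]
  rw [sum_sq_eq_coeff_prod_one_sub_C_mul_X, ← hreflected, coeff_map, coeff_map,
    Complex.coe_algebraMap]
  exact_mod_cast GC.coeff_reflected_sq_sub a b m

theorem geronimo_case_sum_root_squares (a b : ℕ → ℝ) (ha : ∀ j, 0 < a j)
    (m : ℕ) (z : Fin m → ℂ)
    (hz : ((GC a b m).1).map (algebraMap ℝ ℂ) = ∏ j, (X - C (z j))) :
    ∑ j, (z j) ^ 2 =
      (∑ j ∈ Finset.Icc 1 ((m + 1) / 2), ((b j : ℝ) : ℂ) ^ 2)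
        + 2 * ∑ j ∈ Finset.Icc 1 (m / 2), (((a j : ℝ) : ℂ) ^ 2 - 1) :=
  geronimo_case_sum_root_squares_general a b m z hz
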